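/- For every real number ν and all real numbers ε > 0 and h_δ > 0, each factor 1 − exp( −(ε/k²)·exp(ν + (k−1)·h_δ) ) lies in (0,1), and the infinite product ∏_{k=1}^∞ ( 1 − exp( −(ε/k²)·exp(ν + (k−1)·h_δ) ) ) converges to a strictly positive limit. -/

import Mathlib

/-!
Write the `k`-th factor as `1 - exp (-a k)` with `a k = ε / (k + 1)² · exp (ν + k h_δ)`.
Since `exp (-a) ≤ a⁻¹`, the defects `exp (-a k)` are dominated by a multiple of
`(k + 1)² exp (-h_δ k)`, hence summable. A product `∏ (1 - x k)` with `x k < 1` and `x` summable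
is `exp` of the convergent series `∑ log (1 - x k)`, so its limit is positive.
-/

open Filter Topology Finset Real

namespace Real

theorem exists_pos_tendsto_prod_one_sub_of_summable {x : ℕ → ℝ} (hx : ∀ k, x k < 1)
    (hs : Summable x) :
    ∃ P : ℝ, 0 < P ∧ Tendsto (fun n ↦ ∏ k ∈ range n, (1 - x k)) atTop (𝓝 P) := by
  have hlog : Summable fun k ↦ log (1 - x k) := by
    simpa only [sub_eq_add_neg] using summable_log_one_add_of_summable hs.neg
  exact ⟨_, exp_pos _,
    (hasProd_of_hasSum_log (fun k ↦ sub_pos.2 (hx k)) hlog.hasSum).tendsto_prod_nat⟩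

theorem summable_exp_neg_of_summable_inv {ι : Type*} {a : ι → ℝ} (ha : ∀ i, 0 < a i)
    (hs : Summable fun i ↦ (a i)⁻¹) : Summable fun i ↦ exp (-a i) :=
  hs.of_nonneg_of_le (fun _ ↦ (exp_pos _).le) fun i ↦ by
    rw [exp_neg]
    exact inv_anti₀ (ha i) ((le_add_of_nonneg_right zero_le_one).trans (add_one_le_exp _))

theorem summable_add_one_sq_mul_exp_neg_nat_mul {r : ℝ} (hr : 0 < r) :
    Summable fun n : ℕ ↦ ((n : ℝ) + 1) ^ 2 * exp (-r * n) := by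
  have h := ((summable_nat_add_iff 1).2 (summable_pow_mul_exp_neg_nat_mul 2 hr)).mul_left (exp r)
  refine h.congr fun n ↦ ?_
  push_cast
  rw [mul_left_comm, ← exp_add]
  ring_nf

end Real

/-- For every real ν and all reals ε > 0 and h_δ > 0, each factor
1 − exp(−(ε/k²)·exp(ν + (k−1)·h_δ)) lies in (0,1), and the infinite product
∏_{k=1}^∞ (1 − exp(−(ε/k²)·exp(ν + (k−1)·h_δ))) converges to a strictly positive limit.
(The index `k : ℕ` corresponds to `k+1` in the statement, so the product runs over k ≥ 1.) -/
theorem stmt1 (ν ε hd : ℝ) (hε : 0 < ε) (hhd : 0 < hd) :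
    (∀ k : ℕ,
      0 < 1 - Real.exp (-(ε / ((k : ℝ) + 1) ^ 2) * Real.exp (ν + (k : ℝ) * hd)) ∧
      1 - Real.exp (-(ε / ((k : ℝ) + 1) ^ 2) * Real.exp (ν + (k : ℝ) * hd)) < 1) ∧
    ∃ P : ℝ, 0 < P ∧
      Filter.Tendsto
        (fun n : ℕ => ∏ k ∈ Finset.range n,
          (1 - Real.exp (-(ε / ((k : ℝ) + 1) ^ 2) * Real.exp (ν + (k : ℝ) * hd))))
        Filter.atTop (nhds P) := by
  set a : ℕ → ℝ := fun k ↦ ε / ((k : ℝ) + 1) ^ 2 * exp (ν + k * hd)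
  have ha : ∀ k, 0 < a k := fun k ↦ by positivity
  have hlt : ∀ k, exp (-a k) < 1 := fun k ↦ exp_lt_one_iff.2 (neg_lt_zero.2 (ha k))
  have hinv : (fun k ↦ (a k)⁻¹) =
      fun k : ℕ ↦ (ε * exp ν)⁻¹ * (((k : ℝ) + 1) ^ 2 * exp (-hd * k)) := by
    ext k
    simp only [a, exp_add]
    rw [show -hd * k = -(k * hd) by ring, exp_neg]
    field_simp
  have hs : Summable fun k ↦ exp (-a k) := summable_exp_neg_of_summable_inv ha
    (hinv ▸ (summable_add_one_sq_mul_exp_neg_nat_mul hhd).mul_left _)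
  simp only [neg_mul]
  exact ⟨fun k ↦ ⟨sub_pos.2 (hlt k), sub_lt_self _ (exp_pos _)⟩,
    exists_pos_tendsto_prod_one_sub_of_summable hlt hs⟩
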